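/- Let d ≥ 1, k > 0, α ∈ ℝ, and let v : ℝ^d → ℂ be continuously differentiable. For x ≠ 0 write r := |x|, x̂ := x/r, and v_r := x̂·∇v, and define M_{r,α}v := x·∇v − i k r v + α v and the vector field Q_{r,α}(v) := 2 k^{−1} Re( conj(M_{r,α}v) · k^{−1}∇v ) + ( |v|² − k^{−2}|∇v|² ) x. Then at every x ∈ ℝ^d with x ≠ 0, Q_{r,α}(v)·x̂ = r k^{−2} ( |M_{r,α}v|²/r² − α² |v|²/r² − ( |∇v|² − |v_r|² ) ). -/

import Mathlib

open Complex

noncomputable section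

/-- Partial derivative (complex-valued) in the `i`-th coordinate direction. -/
def pd (d : ℕ) (i : Fin d) (f : EuclideanSpace ℝ (Fin d) → ℂ) :
    EuclideanSpace ℝ (Fin d) → ℂ :=
  fun x => fderiv ℝ f x (EuclideanSpace.single i 1)

/-- `|∇v|² = Σⱼ |∂ⱼv|²`. -/
def gradSq (d : ℕ) (v : EuclideanSpace ℝ (Fin d) → ℂ) : EuclideanSpace ℝ (Fin d) → ℝ :=
  fun x => ∑ i, ‖pd d i v x‖ ^ 2

/-- The radial derivative `v_r = (x/r)·∇v`. -/
def radialDeriv (d : ℕ) (v : EuclideanSpace ℝ (Fin d) → ℂ) :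
    EuclideanSpace ℝ (Fin d) → ℂ :=
  fun x => (∑ i, (x i : ℂ) * pd d i v x) / ((‖x‖ : ℝ) : ℂ)

/-- The Morawetz–Ludwig multiplier `M_{r,α}v = x·∇v − i k r v + α v`. -/
def Mrop (d : ℕ) (k : ℝ) (α : ℝ) (v : EuclideanSpace ℝ (Fin d) → ℂ) :
    EuclideanSpace ℝ (Fin d) → ℂ :=
  fun x => (∑ i, (x i : ℂ) * pd d i v x) - Complex.I * (k : ℂ) * ((‖x‖ : ℝ) : ℂ) * v x
    + (α : ℂ) * v x

/-- The `j`-th component of the Morawetz flux vector field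
`Q_{r,α}(v) = 2 k⁻¹ Re( conj(M_{r,α}v) · k⁻¹∇v ) + ( |v|² − k⁻²|∇v|² ) x`. -/
def fluxR (d : ℕ) (k : ℝ) (α : ℝ) (v : EuclideanSpace ℝ (Fin d) → ℂ) (j : Fin d) :
    EuclideanSpace ℝ (Fin d) → ℝ :=
  fun x => 2 * k⁻¹ * ((starRingEnd ℂ) (Mrop d k α v x) * (((k⁻¹ : ℝ) : ℂ) * pd d j v x)).re
    + (‖v x‖ ^ 2 - (k⁻¹) ^ 2 * gradSq d v x) * x j

/-- **Radial component of the Morawetz flux.**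
For `v ∈ C¹(ℝ^d, ℂ)`, `k > 0`, `α ∈ ℝ`, at every `x ≠ 0` (with `r = |x|`, `x̂ = x/r`),
`Q_{r,α}(v)·x̂ = r k⁻² ( |M_{r,α}v|²/r² − α²|v|²/r² − ( |∇v|² − |v_r|² ) )`. -/
theorem morawetz_flux_radial_component
    {d : ℕ} (hd : 1 ≤ d) (k : ℝ) (hk : 0 < k) (α : ℝ)
    (v : EuclideanSpace ℝ (Fin d) → ℂ) (hv : ContDiff ℝ 1 v)
    (x : EuclideanSpace ℝ (Fin d)) (hx : x ≠ 0) :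
    (∑ j, fluxR d k α v j x * (x j / ‖x‖))
      = ‖x‖ * (k ^ 2)⁻¹ *
          (‖Mrop d k α v x‖ ^ 2 / ‖x‖ ^ 2 - α ^ 2 * ‖v x‖ ^ 2 / ‖x‖ ^ 2
            - (gradSq d v x - ‖radialDeriv d v x‖ ^ 2)) := by
  have hr : (0:ℝ) < ‖x‖ := norm_pos_iff.mpr hx
  have hk' : k ≠ 0 := hk.ne'
  set r : ℝ := ‖x‖ with hrdef
  set S : ℂ := ∑ i, (x i : ℂ) * pd d i v x with hS
  set w : ℂ := v x with hw
  set g : ℝ := gradSq d v x with hg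
  have hsum : ∑ j, x j * x j = r ^ 2 := by
    rw [hrdef, EuclideanSpace.norm_eq, Real.sq_sqrt (by positivity)]
    exact Finset.sum_congr rfl fun j _ => by rw [Real.norm_eq_abs, _root_.sq_abs, sq]
  have hM : Mrop d k α v x = S - Complex.I * (k:ℂ) * (r:ℂ) * w + (α:ℂ) * w := rfl
  have hrad : radialDeriv d v x = S / (r:ℂ) := rfl
  have expand : ∀ j, fluxR d k α v j x * (x j / r)
      = (2 * k⁻¹ * k⁻¹ / r)
          * ((starRingEnd ℂ) (Mrop d k α v x) * ((x j : ℂ) * pd d j v x)).re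
        + (‖w‖ ^ 2 - (k⁻¹) ^ 2 * g) / r * (x j * x j) := by
    intro j
    simp only [fluxR]
    have h1 : (starRingEnd ℂ) (Mrop d k α v x) * (((k⁻¹:ℝ):ℂ) * pd d j v x)
        = ((k⁻¹:ℝ):ℂ) * ((starRingEnd ℂ) (Mrop d k α v x) * pd d j v x) := by ring
    have h2 : (starRingEnd ℂ) (Mrop d k α v x) * ((x j : ℂ) * pd d j v x)
        = ((x j : ℝ):ℂ) * ((starRingEnd ℂ) (Mrop d k α v x) * pd d j v x) := by ring
    rw [h1, h2, Complex.re_ofReal_mul, Complex.re_ofReal_mul]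
    ring
  have hsumre : ∑ j, ((starRingEnd ℂ) (Mrop d k α v x) * ((x j : ℂ) * pd d j v x)).re
      = ((starRingEnd ℂ) (Mrop d k α v x) * S).re := by
    rw [hS, Finset.mul_sum, Complex.re_sum]
  calc (∑ j, fluxR d k α v j x * (x j / r))
      = ∑ j, ((2 * k⁻¹ * k⁻¹ / r)
          * ((starRingEnd ℂ) (Mrop d k α v x) * ((x j : ℂ) * pd d j v x)).re
        + (‖w‖ ^ 2 - (k⁻¹) ^ 2 * g) / r * (x j * x j)) :=
        Finset.sum_congr rfl fun j _ => expand j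
    _ = (2 * k⁻¹ * k⁻¹ / r) * ((starRingEnd ℂ) (Mrop d k α v x) * S).re
        + (‖w‖ ^ 2 - (k⁻¹) ^ 2 * g) / r * r ^ 2 := by
        rw [Finset.sum_add_distrib, ← Finset.mul_sum, ← Finset.mul_sum, hsum, hsumre]
    _ = r * (k ^ 2)⁻¹ *
          (‖Mrop d k α v x‖ ^ 2 / r ^ 2 - α ^ 2 * ‖w‖ ^ 2 / r ^ 2
            - (g - ‖radialDeriv d v x‖ ^ 2)) := by
        rw [hM, hrad]
        simp only [Complex.sq_norm, Complex.normSq_apply,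
          Complex.mul_re, Complex.conj_re, Complex.conj_im, Complex.add_re,
          Complex.add_im, Complex.sub_re, Complex.sub_im, Complex.mul_im,
          Complex.ofReal_re, Complex.ofReal_im, Complex.I_re, Complex.I_im,
          Complex.div_re, Complex.div_im, Complex.normSq_ofReal]
        field_simp
        ring

end
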